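/- arXiv:1102.3483 — 2 statements merged into one kernel-verified Lean document; each statement's English description precedes it below -/
import Mathlib

section
/- The 4-dimensional 0-Möbius cube 0-MQ_4 and the 4-dimensional locally twisted cube LTQ_4 are isomorphic as simple graphs. -/
/-- Vertices of the 3-dimensional cubes: binary strings `x1x2x3` of length 3. -/
abbrev Vtx3 := Bool × Bool × Bool

/-- The 12 edges of the 3-dimensional locally twisted cube `LTQ_3`. -/
def ltq3EdgeList : List (Vtx3 × Vtx3) :=
  [ ((false,false,false),(false,false,true)),
    ((false,false,true),(false,true,true)),
    ((false,true,true),(false,true,false)),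
    ((false,true,false),(false,false,false)),
    ((true,false,false),(true,false,true)),
    ((true,false,true),(true,true,true)),
    ((true,true,true),(true,true,false)),
    ((true,true,false),(true,false,false)),
    ((false,false,false),(true,false,false)),
    ((false,false,true),(true,true,true)),
    ((false,true,false),(true,true,false)),
    ((false,true,true),(true,false,true)) ]

/-- The 3-dimensional locally twisted cube `LTQ_3`. -/
def LTQ3 : SimpleGraph Vtx3 where
  Adj u v := (u, v) ∈ ltq3EdgeList ∨ (v, u) ∈ ltq3EdgeList
  symm := ⟨fun _ _ h => Or.symm h⟩
  loopless := by
    constructor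
    intro x
    revert x
    decide

instance : DecidableRel LTQ3.Adj :=
  fun u v => inferInstanceAs (Decidable ((u, v) ∈ ltq3EdgeList ∨ (v, u) ∈ ltq3EdgeList))

/-- Vertices of the 4-dimensional cubes: binary strings `x1x2x3x4` of length 4. -/
abbrev Vtx4 := Bool × Vtx3

/-- The twist map of the locally twisted cube:
`x2x3x4 ↦ (x2+x4)x3x4`, where `+` is addition mod 2. -/
def ltqTwist : Vtx3 → Vtx3
  | (x2, x3, x4) => (xor x2 x4, x3, x4)

/-- The 4-dimensional locally twisted cube `LTQ_4`: two copies of `LTQ_3`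
(prefixed with 0 resp. 1), and each `0x2x3x4` joined to `1(x2+x4)x3x4`. -/
def LTQ4 : SimpleGraph Vtx4 where
  Adj u v := (u.1 = v.1 ∧ LTQ3.Adj u.2 v.2)
    ∨ (u.1 = false ∧ v.1 = true ∧ v.2 = ltqTwist u.2)
    ∨ (u.1 = true ∧ v.1 = false ∧ u.2 = ltqTwist v.2)
  symm := by
    constructor
    rintro ⟨b1, x⟩ ⟨b2, y⟩ (⟨h1, h2⟩ | ⟨h1, h2, h3⟩ | ⟨h1, h2, h3⟩)
    · exact Or.inl ⟨h1.symm, h2.symm⟩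
    · exact Or.inr (Or.inr ⟨h2, h1, h3⟩)
    · exact Or.inr (Or.inl ⟨h2, h1, h3⟩)
  loopless := by
    constructor
    rintro ⟨b, x⟩ (⟨-, h⟩ | ⟨h1, h2, -⟩ | ⟨h1, h2, -⟩)
    · exact LTQ3.loopless.irrefl x h
    · subst h1; exact Bool.false_ne_true h2
    · subst h2; exact Bool.false_ne_true h1

/-- The list of the four Möbius neighbours `Y_1, …, Y_4` of a vertex `x1x2x3x4`
of the 4-dimensional Möbius cube with fixed bit `x0 = b`:
`Y_i` is obtained by complementing the bit `x_i` if `x_{i-1} = 0`, and by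
complementing all the bits `x_i, …, x_n` if `x_{i-1} = 1`. -/
def mq4Nbrs (b : Bool) : Vtx4 → List Vtx4
  | (x1, x2, x3, x4) =>
    [ if b then (!x1, !x2, !x3, !x4) else (!x1, x2, x3, x4),
      if x1 then (x1, !x2, !x3, !x4) else (x1, !x2, x3, x4),
      if x2 then (x1, x2, !x3, !x4) else (x1, x2, !x3, x4),
      if x3 then (x1, x2, x3, !x4) else (x1, x2, x3, !x4) ]

/-- The 4-dimensional Möbius cube with fixed bit `x0 = b`
(`0-MQ_4` for `b = false`, `1-MQ_4` for `b = true`). -/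
def MQ4 (b : Bool) : SimpleGraph Vtx4 where
  Adj u v := v ∈ mq4Nbrs b u ∨ u ∈ mq4Nbrs b v
  symm := ⟨fun _ _ h => Or.symm h⟩
  loopless := by
    constructor
    intro x
    cases b <;> revert x <;> decide

/-!
Both cubes split along the first coordinate into two 3-dimensional halves joined by a
perfect matching: `0-MQ_4` into `0-MQ_3` and `1-MQ_3` matched by `0x ~ 1x`, and `LTQ_4`
into two copies of `LTQ_3` matched by the twist `0x ~ 1t(x)`. An isomorphism of joined
graphs is therefore assembled from isomorphisms `f₀ : 0-MQ_3 ≃ LTQ_3` and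
`f₁ : 1-MQ_3 ≃ LTQ_3` with `f₁ = t ∘ f₀`; the affine map `x₂x₃x₄ ↦ x₃(x₃+x₄)(1+x₂)`
is such an `f₀`.
-/

namespace SimpleGraph

variable {V W : Type*} {G₀ G₁ : SimpleGraph V} {H₀ H₁ : SimpleGraph W}
  {σ : V → V} {τ : W → W}

def joinAlong (G₀ G₁ : SimpleGraph V) (σ : V → V) : SimpleGraph (Bool × V) where
  Adj
    | (false, x), (false, y) => G₀.Adj x y
    | (true, x), (true, y) => G₁.Adj x y
    | (false, x), (true, y) => y = σ x
    | (true, x), (false, y) => x = σ y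
  symm := by
    constructor
    rintro ⟨_ | _, x⟩ ⟨_ | _, y⟩ h
    exacts [h.symm, h, h, h.symm]
  loopless := by
    constructor
    rintro ⟨_ | _, x⟩ h
    exacts [G₀.loopless.irrefl x h, G₁.loopless.irrefl x h]

@[simp] theorem joinAlong_adj_false_false {x y : V} :
    (G₀.joinAlong G₁ σ).Adj (false, x) (false, y) ↔ G₀.Adj x y := .rfl

@[simp] theorem joinAlong_adj_true_true {x y : V} :
    (G₀.joinAlong G₁ σ).Adj (true, x) (true, y) ↔ G₁.Adj x y := .rfl

@[simp] theorem joinAlong_adj_false_true {x y : V} :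
    (G₀.joinAlong G₁ σ).Adj (false, x) (true, y) ↔ y = σ x := .rfl

@[simp] theorem joinAlong_adj_true_false {x y : V} :
    (G₀.joinAlong G₁ σ).Adj (true, x) (false, y) ↔ x = σ y := .rfl

def Iso.joinAlong (f₀ : G₀ ≃g H₀) (f₁ : G₁ ≃g H₁) (hf : ∀ x, f₁ (σ x) = τ (f₀ x)) :
    G₀.joinAlong G₁ σ ≃g H₀.joinAlong H₁ τ where
  toFun
    | (false, x) => (false, f₀ x)
    | (true, x) => (true, f₁ x)
  invFun
    | (false, y) => (false, f₀.symm y)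
    | (true, y) => (true, f₁.symm y)
  left_inv := by rintro ⟨_ | _, x⟩ <;> simp
  right_inv := by rintro ⟨_ | _, y⟩ <;> simp
  map_rel_iff' := by
    rintro ⟨_ | _, x⟩ ⟨_ | _, y⟩ <;>
      simp [f₀.map_adj_iff, f₁.map_adj_iff, ← hf, f₁.injective.eq_iff]

end SimpleGraph

open SimpleGraph

def mq3Nbrs (b : Bool) : Vtx3 → List Vtx3
  | (x2, x3, x4) =>
    [ if b then (!x2, !x3, !x4) else (!x2, x3, x4),
      if x2 then (x2, !x3, !x4) else (x2, !x3, x4),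
      (x2, x3, !x4) ]

def MQ3 (b : Bool) : SimpleGraph Vtx3 where
  Adj u v := v ∈ mq3Nbrs b u ∨ u ∈ mq3Nbrs b v
  symm := ⟨fun _ _ h => Or.symm h⟩
  loopless := by
    constructor
    intro x
    cases b <;> revert x <;> decide

instance (b : Bool) : DecidableRel (MQ3 b).Adj := fun u v =>
  inferInstanceAs (Decidable (v ∈ mq3Nbrs b u ∨ u ∈ mq3Nbrs b v))

instance (b : Bool) : DecidableRel (MQ4 b).Adj := fun u v =>
  inferInstanceAs (Decidable (v ∈ mq4Nbrs b u ∨ u ∈ mq4Nbrs b v))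

theorem mq4_eq_joinAlong (b : Bool) :
    MQ4 b =
      (MQ3 false).joinAlong (MQ3 true) (cond b (fun (x2, x3, x4) => (!x2, !x3, !x4)) id) := by
  ext ⟨_ | _, x⟩ ⟨_ | _, y⟩ <;> simp only [joinAlong_adj_false_false, joinAlong_adj_true_true,
    joinAlong_adj_false_true, joinAlong_adj_true_false] <;> cases b <;> revert x y <;> decide

theorem ltq4_eq_joinAlong : LTQ4 = LTQ3.joinAlong LTQ3 ltqTwist := by
  ext ⟨_ | _, x⟩ ⟨_ | _, y⟩ <;> simp [LTQ4]

def ltqTwistEquiv : Vtx3 ≃ Vtx3 :=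
  Function.Involutive.toPerm ltqTwist fun (x2, x3, x4) => by simp [ltqTwist]

def mq3ZeroEquivLtq3 : Vtx3 ≃ Vtx3 where
  toFun | (x2, x3, x4) => (x3, xor x3 x4, !x2)
  invFun | (y1, y2, y3) => (!y3, y1, xor y1 y2)
  left_inv := by decide
  right_inv := by decide

def mq3ZeroIsoLtq3 : MQ3 false ≃g LTQ3 where
  toEquiv := mq3ZeroEquivLtq3
  map_rel_iff' := by decide

def mq3OneIsoLtq3 : MQ3 true ≃g LTQ3 where
  toEquiv := mq3ZeroEquivLtq3.trans ltqTwistEquiv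
  map_rel_iff' := by decide

/-- The 4-dimensional 0-Möbius cube `0-MQ_4` and the 4-dimensional locally
twisted cube `LTQ_4` are isomorphic as simple graphs. -/
theorem mq4_zero_iso_ltq4 : Nonempty (MQ4 false ≃g LTQ4) := by
  rw [mq4_eq_joinAlong, ltq4_eq_joinAlong]
  exact ⟨.joinAlong mq3ZeroIsoLtq3 mq3OneIsoLtq3 fun _ => rfl⟩
end

section
/- If X is a set of vertices of LTQ_3 such that ⟨X⟩ is isomorphic to C_4, then ⟨V(LTQ_3) \ X⟩ is also isomorphic to C_4, and there exists a matching of cardinality four between X and V(LTQ_3) \ X, i.e., four pairwise disjoint edges of LTQ_3 each joining a vertex of X to a vertex of V(LTQ_3) \ X. -/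
/-!
The 4-cycles of `LTQ_3` are exactly the four level sets `x₁ = β` and `x₃ = β`; this is a finite
check, and since `LTQ_3` is triangle-free every 4-cycle is induced. The complement of a level set
is the opposite level set, hence again a 4-cycle, and the perfect matching between the two is given
by the edges changing that coordinate: `x ↦ (¬x₁, x₂ ⊕ x₃, x₃)` (the twisted edges) for `x₁`, and
`x ↦ (x₁, x₂, ¬x₃)` for `x₃`.
-/

open SimpleGraph

theorem SimpleGraph.exists_embedding_range_eq_of_induce_iso {V W : Type*} {G : SimpleGraph V}
    {H : SimpleGraph W} {s : Set V} (e : G.induce s ≃g H) : ∃ f : H ↪g G, Set.range f = s :=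
  ⟨(Embedding.induce s).comp e.symm.toEmbedding, by
    rw [RelEmbedding.coe_trans, RelIso.coe_toRelEmbedding, e.symm.surjective.range_comp]
    exact Subtype.range_coe⟩

def ltq3Coord : Bool → Vtx3 → Bool
  | false, x => x.1
  | true, x => x.2.2

def ltq3Flip : Bool → Vtx3 → Vtx3
  | false, (a, y, z) => (!a, xor y z, z)
  | true, (a, y, z) => (a, y, !z)

def ltq3LevelCycle : Bool → Bool → Fin 4 → Vtx3
  | false, β => ![(β, false, false), (β, false, true), (β, true, true), (β, true, false)]
  | true, β => ![(false, false, β), (false, true, β), (true, !β, β), (true, β, β)]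

set_option synthInstance.maxSize 2000 in
theorem ltq3_fourCycle_eq_level : ∀ a b c d : Vtx3, LTQ3.Adj a b → LTQ3.Adj b c → LTQ3.Adj c d →
    LTQ3.Adj d a → a ≠ c → b ≠ d →
    ∃ k β, ∀ x, (a = x ∨ b = x ∨ c = x ∨ d = x) ↔ ltq3Coord k x = β := by
  decide

theorem ltq3_range_eq_level (f : Copy (cycleGraph 4) LTQ3) :
    ∃ k β, Set.range f = {x | ltq3Coord k x = β} := by
  obtain ⟨k, β, h⟩ := ltq3_fourCycle_eq_level (f 0) (f 1) (f 2) (f 3)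
    (f.toHom.map_adj (by decide)) (f.toHom.map_adj (by decide)) (f.toHom.map_adj (by decide))
    (f.toHom.map_adj (by decide)) (f.injective.ne (by decide)) (f.injective.ne (by decide))
  refine ⟨k, β, Set.ext fun x => ?_⟩
  simp [Fin.exists_fin_succ, ← h]

theorem ltq3_induce_level_iso_cycleGraph (k β : Bool) :
    Nonempty (LTQ3.induce {x | ltq3Coord k x = β} ≃g cycleGraph 4) := by
  let f : cycleGraph 4 ↪g LTQ3 :=
    { toFun := ltq3LevelCycle k β
      inj' := by revert k β; decide
      map_rel_iff' := by revert k β; decide }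
  have hf : Set.range f = {x | ltq3Coord k x = β} := by
    ext x
    revert k β x
    decide
  exact hf ▸ ⟨f.isoInduceRange.symm⟩

theorem ltq3_adj_flip : ∀ k x, LTQ3.Adj x (ltq3Flip k x) := by decide

theorem ltq3Coord_flip : ∀ k x, ltq3Coord k (ltq3Flip k x) = !ltq3Coord k x := by decide

theorem ltq3Flip_involutive (k : Bool) : Function.Involutive (ltq3Flip k) := by
  intro x
  revert k x
  decide

/-- If `X ⊆ V(LTQ_3)` induces a 4-cycle, then so does its complement, and there
is a matching of cardinality four between `X` and its complement. -/
theorem ltq3_c4_complement (X : Set Vtx3)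
    (h : Nonempty (LTQ3.induce X ≃g SimpleGraph.cycleGraph 4)) :
    Nonempty (LTQ3.induce Xᶜ ≃g SimpleGraph.cycleGraph 4) ∧
    ∃ e : Fin 4 → Vtx3 × Vtx3,
      (∀ i, (e i).1 ∈ X ∧ (e i).2 ∈ Xᶜ ∧ LTQ3.Adj (e i).1 (e i).2) ∧
      Function.Injective (fun i => (e i).1) ∧
      Function.Injective (fun i => (e i).2) := by
  obtain ⟨e⟩ := h
  obtain ⟨f, rfl⟩ := exists_embedding_range_eq_of_induce_iso e
  obtain ⟨k, β, hf⟩ := ltq3_range_eq_level f.toCopy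
  replace hf : Set.range f = {x | ltq3Coord k x = β} := hf
  have hcompl : (Set.range f)ᶜ = {x | ltq3Coord k x = !β} := by
    rw [hf]
    exact Set.ext fun _ => Bool.eq_not.symm
  refine ⟨hcompl ▸ ltq3_induce_level_iso_cycleGraph k !β, fun i => (f i, ltq3Flip k (f i)),
    fun i => ⟨Set.mem_range_self i, ?_, ltq3_adj_flip k (f i)⟩, f.injective,
    (ltq3Flip_involutive k).injective.comp f.injective⟩
  have hfi : ltq3Coord k (f i) = β := hf.subset (Set.mem_range_self i)
  rw [hcompl, Set.mem_ofPred_eq, ltq3Coord_flip, hfi]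
end
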